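/- arXiv:1806.03703 — 10 statements merged into one kernel-verified Lean document; each statement's English description precedes it below -/
import Mathlib

section
/- Define the mirror map μ : I → I by μ(nop) = nop, μ(swap) = swap, μ(inp) = out, μ(out) = inp, μ(set) = res, μ(res) = set, μ(used) = free, μ(free) = used. Then for every type of nets τ ⊆ I and every transition system A: A has the τ-SSP if and only if A has the μ(τ)-SSP, and A has the τ-ESSP if and only if A has the μ(τ)-ESSP. -/
/-! Boolean interactions -/

abbrev Interaction := Bool → Option Bool

def iNop : Interaction := fun b => some b
def iInp : Interaction := fun b => if b then some false else none
def iOut : Interaction := fun b => if b then none else some true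
def iSet : Interaction := fun _ => some true
def iRes : Interaction := fun _ => some false
def iSwap : Interaction := fun b => some (!b)
def iUsed : Interaction := fun b => if b then some true else none
def iFree : Interaction := fun b => if b then none else some false

def allInteractions : Set Interaction :=
  {iNop, iInp, iOut, iSet, iRes, iSwap, iUsed, iFree}

/-! Transition systems and regions -/

structure TS (S E : Type) where
  delta : S → E → Option S
  init : S

def IsRegion {S E : Type} (A : TS S E) (τ : Set Interaction)
    (sup : S → Bool) (sig : E → Interaction) : Prop :=
  (∀ e, sig e ∈ τ) ∧
  ∀ s e s', A.delta s e = some s' → sig e (sup s) = some (sup s')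

def Separable {S E : Type} (A : TS S E) (τ : Set Interaction) (s s' : S) : Prop :=
  ∃ sup sig, IsRegion A τ sup sig ∧ sup s ≠ sup s'

def Inhibitable {S E : Type} (A : TS S E) (τ : Set Interaction) (e : E) (s : S) : Prop :=
  ∃ sup sig, IsRegion A τ sup sig ∧ sig e (sup s) = none

def SSP {S E : Type} (A : TS S E) (τ : Set Interaction) : Prop :=
  ∀ s s' : S, s ≠ s' → Separable A τ s s'

def ESSP {S E : Type} (A : TS S E) (τ : Set Interaction) : Prop :=
  ∀ (s : S) (e : E), A.delta s e = none → Inhibitable A τ e s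

def Feasible {S E : Type} (A : TS S E) (τ : Set Interaction) : Prop :=
  SSP A τ ∧ ESSP A τ

def Reachable {S E : Type} (A : TS S E) : Prop :=
  ∀ s : S, Relation.ReflTransGen (fun x y => ∃ e, A.delta x e = some y) A.init s

/-- The mirror map on interactions, given by the table
nop ↦ nop, swap ↦ swap, inp ↦ out, out ↦ inp, set ↦ res, res ↦ set,
used ↦ free, free ↦ used. -/
noncomputable def mirror (i : Interaction) : Interaction :=
  if i = iNop then iNop
  else if i = iInp then iOut
  else if i = iOut then iInp
  else if i = iSet then iRes
  else if i = iRes then iSet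
  else if i = iSwap then iSwap
  else if i = iUsed then iFree
  else if i = iFree then iUsed
  else i

/-!
On the eight interactions of `I`, the mirror map is conjugation by boolean negation,
`i ↦ not ∘ i ∘ not`. Complementing the support of a `τ`-region and conjugating its signature
therefore gives a `μ(τ)`-region that separates the same states and inhibits the same events at
the same states; since conjugation is an involution, the construction also runs backwards.
-/

def conjNot (i : Interaction) : Interaction := fun b => (i (!b)).map not

lemma conjNot_involutive : Function.Involutive conjNot := by
  intro i
  funext b
  cases h : i b <;> simp [conjNot, h]

lemma mirror_eq_conjNot {i : Interaction} (hi : i ∈ allInteractions) : mirror i = conjNot i := by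
  unfold mirror
  split_ifs <;> try (subst_vars; funext b; cases b <;> rfl)
  simp_all [allInteractions]

lemma image_mirror_eq_image_conjNot {τ : Set Interaction} (hτ : τ ⊆ allInteractions) :
    mirror '' τ = conjNot '' τ :=
  Set.image_congr fun _ hi => mirror_eq_conjNot (hτ hi)

section Conjugation

variable {S E : Type} {A : TS S E} {τ : Set Interaction}

lemma IsRegion.conjNot {sup : S → Bool} {sig : E → Interaction} (h : IsRegion A τ sup sig) :
    IsRegion A (conjNot '' τ) (fun s => !sup s) (fun e => conjNot (sig e)) :=
  ⟨fun e => Set.mem_image_of_mem _ (h.1 e),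
    fun s e s' hd => by simp [_root_.conjNot, h.2 s e s' hd]⟩

lemma SSP.conjNot (h : SSP A τ) : SSP A (conjNot '' τ) := by
  intro s s' hne
  obtain ⟨sup, sig, hreg, hsep⟩ := h s s' hne
  exact ⟨_, _, hreg.conjNot, by simpa using hsep⟩

lemma ESSP.conjNot (h : ESSP A τ) : ESSP A (conjNot '' τ) := by
  intro s e hd
  obtain ⟨sup, sig, hreg, hinh⟩ := h s e hd
  exact ⟨_, _, hreg.conjNot, by simp [_root_.conjNot, hinh]⟩

lemma SSP_conjNot_iff : SSP A (conjNot '' τ) ↔ SSP A τ := by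
  refine ⟨fun h => ?_, SSP.conjNot⟩
  simpa only [conjNot_involutive.leftInverse.image_image] using h.conjNot

lemma ESSP_conjNot_iff : ESSP A (conjNot '' τ) ↔ ESSP A τ := by
  refine ⟨fun h => ?_, ESSP.conjNot⟩
  simpa only [conjNot_involutive.leftInverse.image_image] using h.conjNot

end Conjugation

theorem mirror_SSP_ESSP_general {S E : Type}
    (A : TS S E)
    (τ : Set Interaction) (hτ : τ ⊆ allInteractions) :
    (SSP A τ ↔ SSP A (mirror '' τ)) ∧ (ESSP A τ ↔ ESSP A (mirror '' τ)) := by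
  rw [image_mirror_eq_image_conjNot hτ]
  exact ⟨SSP_conjNot_iff.symm, ESSP_conjNot_iff.symm⟩

/-- the mirror map preserves SSP and ESSP. -/
theorem mirror_SSP_ESSP {S E : Type} [Fintype S] [Fintype E]
    (A : TS S E) (hreach : Reachable A)
    (τ : Set Interaction) (hτ : τ ⊆ allInteractions) :
    (SSP A τ ↔ SSP A (mirror '' τ)) ∧ (ESSP A τ ↔ ESSP A (mirror '' τ)) :=
  mirror_SSP_ESSP_general A τ hτ
end

section
/- Let G be the TS with states {g_0, g_1, g_2, g_3}, initial state g_0, events {a, k, b}, and transitions g_0 --a--> g_1, g_0 --k--> g_2, g_1 --k--> g_3, and g_2 --b--> g_3. For every type of nets τ ⊆ I and every τ-region (sup, sig) of G: (1) if sig(k) = inp then sig(a) ∈ keep+ and sig(b) ∈ keep−; (2) if sig(k) = out then sig(a) ∈ keep− and sig(b) ∈ keep+; (3) if sig(k) = used then sig(a) ∈ keep+ and sig(b) ∈ keep+; (4) if sig(k) = free then sig(a) ∈ keep− and sig(b) ∈ keep−. -/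
/-! The generator TS G on states g0, g1, g2, g3 with events a, k, b and
transitions g0 --a--> g1, g0 --k--> g2, g1 --k--> g3, g2 --b--> g3. -/

inductive GState where
  | g0 | g1 | g2 | g3

inductive GEvent where
  | a | k | b

def G : TS GState GEvent where
  delta := fun s e =>
    match s, e with
    | .g0, .a => some .g1
    | .g0, .k => some .g2
    | .g1, .k => some .g3
    | .g2, .b => some .g3
    | _, _ => none
  init := .g0

def keepPlus : Set Interaction := {iNop, iSet, iUsed}
def keepMinus : Set Interaction := {iNop, iRes, iFree}

/-!
Membership in `keep+` (resp. `keep−`) only depends on the value at `true` (resp. `false`).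
Both `g₀` and `g₁` have an outgoing `k`-edge, so if `sig k` is defined at a single point `x`, then
`sup g₀ = sup g₁ = x` and the `a`-edge `g₀ → g₁` forces `sig a x = x`; with `sig k x = y` also
`sup g₂ = sup g₃ = y`, and the `b`-edge `g₂ → g₃` forces `sig b y = y`.
-/

theorem mem_keepPlus_iff {f : Interaction} : f ∈ keepPlus ↔ f true = some true := by
  refine ⟨by rintro (rfl | rfl | rfl) <;> rfl, fun h => ?_⟩
  simp only [keepPlus, Set.mem_insert_iff, Set.mem_singleton_iff]
  rcases hf : f false with _ | ⟨_ | _⟩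
  · exact Or.inr <| Or.inr <| funext fun b => by cases b <;> simp [iUsed, h, hf]
  · exact Or.inl <| funext fun b => by cases b <;> simp [iNop, h, hf]
  · exact Or.inr <| Or.inl <| funext fun b => by cases b <;> simp [iSet, h, hf]

theorem mem_keepMinus_iff {f : Interaction} : f ∈ keepMinus ↔ f false = some false := by
  refine ⟨by rintro (rfl | rfl | rfl) <;> rfl, fun h => ?_⟩
  simp only [keepMinus, Set.mem_insert_iff, Set.mem_singleton_iff]
  rcases hf : f true with _ | ⟨_ | _⟩
  · exact Or.inr <| Or.inr <| funext fun b => by cases b <;> simp [iFree, h, hf]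
  · exact Or.inr <| Or.inl <| funext fun b => by cases b <;> simp [iRes, h, hf]
  · exact Or.inl <| funext fun b => by cases b <;> simp [iNop, h, hf]

theorem eq_of_apply_not_eq_none {f : Interaction} {x s t : Bool} (hx : f (!x) = none)
    (hs : f s = some t) : s = x := by
  cases s <;> cases x <;> simp_all

theorem IsRegion.generator_keeps {τ : Set Interaction} {sup : GState → Bool}
    {sig : GEvent → Interaction} (hreg : IsRegion G τ sup sig) {x y : Bool}
    (hx : sig .k (!x) = none) (hy : sig .k x = some y) :
    sig .a x = some x ∧ sig .b y = some y := by
  have h₀₂ : sig .k (sup .g0) = some (sup .g2) := hreg.2 .g0 .k .g2 rfl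
  have h₁₃ : sig .k (sup .g1) = some (sup .g3) := hreg.2 .g1 .k .g3 rfl
  have hg₀ : sup .g0 = x := eq_of_apply_not_eq_none hx h₀₂
  have hg₁ : sup .g1 = x := eq_of_apply_not_eq_none hx h₁₃
  have hg₂ : sup .g2 = y := by rw [hg₀, hy] at h₀₂; exact (Option.some.inj h₀₂).symm
  have hg₃ : sup .g3 = y := by rw [hg₁, hy] at h₁₃; exact (Option.some.inj h₁₃).symm
  constructor
  · simpa only [hg₀, hg₁] using hreg.2 .g0 .a .g1 rfl
  · simpa only [hg₂, hg₃] using hreg.2 .g2 .b .g3 rfl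

theorem generator_lemma_general (τ : Set Interaction)
    (sup : GState → Bool) (sig : GEvent → Interaction)
    (hreg : IsRegion G τ sup sig) :
    (sig .k = iInp → sig .a ∈ keepPlus ∧ sig .b ∈ keepMinus) ∧
    (sig .k = iOut → sig .a ∈ keepMinus ∧ sig .b ∈ keepPlus) ∧
    (sig .k = iUsed → sig .a ∈ keepPlus ∧ sig .b ∈ keepPlus) ∧
    (sig .k = iFree → sig .a ∈ keepMinus ∧ sig .b ∈ keepMinus) := by
  simp only [mem_keepPlus_iff, mem_keepMinus_iff]
  refine ⟨fun hk => ?_, fun hk => ?_, fun hk => ?_, fun hk => ?_⟩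
  · exact hreg.generator_keeps (x := true) (y := false) (by simp [hk, iInp]) (by simp [hk, iInp])
  · exact hreg.generator_keeps (x := false) (y := true) (by simp [hk, iOut]) (by simp [hk, iOut])
  · exact hreg.generator_keeps (x := true) (y := true) (by simp [hk, iUsed]) (by simp [hk, iUsed])
  · exact hreg.generator_keeps (x := false) (y := false) (by simp [hk, iFree])
      (by simp [hk, iFree])

/-- the generator lemma. -/
theorem generator_lemma (τ : Set Interaction) (hτ : τ ⊆ allInteractions)
    (sup : GState → Bool) (sig : GEvent → Interaction)
    (hreg : IsRegion G τ sup sig) :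
    (sig .k = iInp → sig .a ∈ keepPlus ∧ sig .b ∈ keepMinus) ∧
    (sig .k = iOut → sig .a ∈ keepMinus ∧ sig .b ∈ keepPlus) ∧
    (sig .k = iUsed → sig .a ∈ keepPlus ∧ sig .b ∈ keepPlus) ∧
    (sig .k = iFree → sig .a ∈ keepMinus ∧ sig .b ∈ keepMinus) :=
  generator_lemma_general τ sup sig hreg
end

section
/- Let τ = {nop, set, res} ∪ ω be a type of nets with ω ⊆ {used, free}. A modest TS A, i.e., a TS that is simple (there are no two transitions s --e--> s' and s --e'--> s' with e ≠ e'), loop-free (there is no transition s --e--> s), and reduced (every event labels at least one transition), is τ-feasible if and only if A has exactly one state. -/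
/-! Every interaction of `{nop, set, res, used, free}` is idempotent: it fixes every value it
produces. So if `s --e--> s'`, every region assigns `sig e` a value at `sup s'` that it keeps;
hence `e` cannot be inhibited at `s'`, the ESSP forces a transition `s' --e--> s''`, and no region
separates `s'` from `s''`, although loop-freeness makes them distinct. A feasible modest TS thus
has no transitions, and by reachability only its initial state. -/

def Interaction.IsIdempotent (i : Interaction) : Prop :=
  ∀ a b, i a = some b → i b = some b

theorem Interaction.isIdempotent_of_mem {ω : Set Interaction} (hω : ω ⊆ {iUsed, iFree})
    {i : Interaction} (hi : i ∈ ({iNop, iSet, iRes} ∪ ω : Set Interaction)) :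
    i.IsIdempotent := by
  have hi' : i = iNop ∨ i = iSet ∨ i = iRes ∨ i = iUsed ∨ i = iFree := by
    rcases hi with hi | hi
    · rcases hi with rfl | rfl | rfl <;> simp
    · rcases hω hi with rfl | rfl <;> simp
  intro a b
  rcases hi' with rfl | rfl | rfl | rfl | rfl <;> cases a <;> cases b <;>
    simp [iNop, iSet, iRes, iUsed, iFree]

section

variable {S E : Type} {A : TS S E} {τ : Set Interaction}

theorem IsRegion.sig_sup_target {sup : S → Bool} {sig : E → Interaction}
    (hreg : IsRegion A τ sup sig) (hτ : ∀ i ∈ τ, i.IsIdempotent) {s s' : S} {e : E}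
    (h : A.delta s e = some s') : sig e (sup s') = some (sup s') :=
  hτ _ (hreg.1 e) _ _ (hreg.2 s e s' h)

theorem not_feasible_of_delta_eq_some (hτ : ∀ i ∈ τ, i.IsIdempotent)
    (hloopfree : ∀ s e, A.delta s e ≠ some s) {s s' : S} {e : E}
    (h : A.delta s e = some s') : ¬ Feasible A τ := by
  rintro ⟨hssp, hessp⟩
  obtain ⟨s'', h'⟩ : ∃ s'', A.delta s' e = some s'' := by
    refine Option.ne_none_iff_exists'.mp fun hnone => ?_
    obtain ⟨sup, sig, hreg, hinh⟩ := hessp s' e hnone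
    simp [hreg.sig_sup_target hτ h] at hinh
  have hne : s' ≠ s'' := fun heq => hloopfree s' e (heq ▸ h')
  obtain ⟨sup, sig, hreg, hsep⟩ := hssp s' s'' hne
  have hstep := hreg.2 s' e s'' h'
  rw [hreg.sig_sup_target hτ h, Option.some_inj] at hstep
  exact hsep hstep

theorem eq_init_of_forall_delta_eq_none (hreach : Reachable A)
    (hnone : ∀ s e, A.delta s e = none) (s : S) : s = A.init := by
  induction hreach s with
  | refl => rfl
  | tail _ hstep _ =>
    obtain ⟨e, he⟩ := hstep
    simp [hnone] at he

theorem feasible_of_subsingleton [Subsingleton S]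
    (hreduced : ∀ e : E, ∃ s s', A.delta s e = some s')
    (hloopfree : ∀ s e, A.delta s e ≠ some s) : Feasible A τ := by
  refine ⟨fun s s' hne => absurd (Subsingleton.elim s s') hne, fun _ e _ => ?_⟩
  obtain ⟨s, s', h⟩ := hreduced e
  exact absurd (Subsingleton.elim s' s ▸ h) (hloopfree s e)

end

theorem modest_feasible_iff_one_state_nop_set_res_general {S E : Type} [Fintype S]
    (A : TS S E) (hreach : Reachable A)
    (hloopfree : ∀ s e, A.delta s e ≠ some s)
    (hreduced : ∀ e : E, ∃ s s', A.delta s e = some s')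
    (ω : Set Interaction) (hω : ω ⊆ {iUsed, iFree}) :
    Feasible A ({iNop, iSet, iRes} ∪ ω) ↔ Fintype.card S = 1 := by
  constructor
  · intro hfeas
    have hnone : ∀ s e, A.delta s e = none := fun s e =>
      Option.eq_none_iff_forall_ne_some.mpr fun _ h =>
        not_feasible_of_delta_eq_some (fun _ => Interaction.isIdempotent_of_mem hω) hloopfree h
          hfeas
    exact Fintype.card_eq_one_iff.mpr ⟨A.init, eq_init_of_forall_delta_eq_none hreach hnone⟩
  · intro hcard
    have : Subsingleton S := Fintype.card_le_one_iff_subsingleton.mp hcard.le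
    exact feasible_of_subsingleton hreduced hloopfree

/-- for τ = {nop, set, res} ∪ ω with ω ⊆ {used, free},
a modest TS (simple, loop-free, reduced) is τ-feasible iff it has exactly one state. -/
theorem modest_feasible_iff_one_state_nop_set_res {S E : Type} [Fintype S] [Fintype E]
    (A : TS S E) (hreach : Reachable A)
    (hsimple : ∀ s s' e e', A.delta s e = some s' → A.delta s e' = some s' → e = e')
    (hloopfree : ∀ s e, A.delta s e ≠ some s)
    (hreduced : ∀ e : E, ∃ s s', A.delta s e = some s')
    (ω : Set Interaction) (hω : ω ⊆ {iUsed, iFree}) :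
    Feasible A ({iNop, iSet, iRes} ∪ ω) ↔ Fintype.card S = 1 :=
  modest_feasible_iff_one_state_nop_set_res_general A hreach hloopfree hreduced ω hω
end

section
/- Let τ = {nop, res} ∪ ω be a type of nets with ω ⊆ {inp, used, free}, let A be a TS, and let Q ⊆ S. Let sup be the indicator function of the closure cl(Q), and define sig : E → τ by the first applicable case: sig(e) = used if used ∈ τ and every state incident to an e-labeled transition lies in cl(Q); sig(e) = free if free ∈ τ and no state incident to an e-labeled transition lies in cl(Q); sig(e) = inp if inp ∈ τ and every transition s --e--> s' has sup(s) = 1 and sup(s') = 0; sig(e) = res if inp ∉ τ and every transition s --e--> s' has sup(s) = 1 and sup(s') = 0; sig(e) = res if at least one but not every transition s --e--> s' has sup(s) = 1 and sup(s') = 0; and sig(e) = nop otherwise. Then (sup, sig) is a τ-region of A. Moreover, for every τ-region (sup', sig') of A with Q ⊆ (sup')⁻¹(1) it holds that cl(Q) ⊆ (sup')⁻¹(1). -/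
/-! The closure cl(Q): the least subset R of S containing Q such that for all
s ∈ R, s' ∈ S, e ∈ E: if s' --e--> s then s' ∈ R, and if s --e--> s' and there
exist z, z' ∈ R with z --e--> z' then s' ∈ R. -/

inductive InCl {S E : Type} (A : TS S E) (Q : Set S) : S → Prop
  | base {s : S} : s ∈ Q → InCl A Q s
  | back {s s' : S} {e : E} : InCl A Q s → A.delta s' e = some s → InCl A Q s'
  | fwd {s s' z z' : S} {e : E} : InCl A Q s → A.delta s e = some s' →
      InCl A Q z → InCl A Q z' → A.delta z e = some z' → InCl A Q s'

open Classical in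
/-- The indicator function of the closure cl(Q). -/
noncomputable def canonSup {S E : Type} (A : TS S E) (Q : Set S) : S → Bool :=
  fun s => if InCl A Q s then true else false

open Classical in
/-- The canonical signature associated with the closure cl(Q), defined by the
first applicable case: used / free / inp / res (inp ∉ τ) / res (partial) / nop. -/
noncomputable def canonSig {S E : Type} (A : TS S E) (τ : Set Interaction)
    (Q : Set S) : E → Interaction :=
  fun e =>
    if iUsed ∈ τ ∧ ∀ s s', A.delta s e = some s' →
        canonSup A Q s = true ∧ canonSup A Q s' = true then iUsed
    else if iFree ∈ τ ∧ ∀ s s', A.delta s e = some s' →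
        canonSup A Q s = false ∧ canonSup A Q s' = false then iFree
    else if iInp ∈ τ ∧ ∀ s s', A.delta s e = some s' →
        canonSup A Q s = true ∧ canonSup A Q s' = false then iInp
    else if iInp ∉ τ ∧ ∀ s s', A.delta s e = some s' →
        canonSup A Q s = true ∧ canonSup A Q s' = false then iRes
    else if (∃ s s', A.delta s e = some s' ∧
              canonSup A Q s = true ∧ canonSup A Q s' = false) ∧
            ¬ (∀ s s', A.delta s e = some s' →
              canonSup A Q s = true ∧ canonSup A Q s' = false) then iRes
    else iNop

/-! The support of any region whose interactions never raise `0` to `1` is closed backwards along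
transitions, and, interactions being functions, an event that keeps the support at `1` somewhere
does so everywhere; hence it is closed under both rules generating `cl(Q)`. Conversely, `cl(Q)` is
itself such a support: an event leaving `cl(Q)` once can never end inside `cl(Q)`, since the
forward rule would then pull the exit target back in, so the event is uniformly `inp`/`res`, and
an event that never leaves `cl(Q)` preserves membership (entering is excluded by the backward
rule). -/

section Minimality

variable {S E : Type} {A : TS S E} {Q : Set S} {τ : Set Interaction}

theorem InCl.sup_eq_true {sup : S → Bool} {sig : E → Interaction}
    (hreg : IsRegion A τ sup sig) (hτ : ∀ i ∈ τ, i false ≠ some true)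
    (hQ : ∀ s ∈ Q, sup s = true) {s : S} (hs : InCl A Q s) : sup s = true := by
  induction hs with
  | base h => exact hQ _ h
  | @back s s' e _ hδ ih =>
    by_contra hs'
    rw [Bool.not_eq_true] at hs'
    have htr := hreg.2 s' e s hδ
    rw [hs', ih] at htr
    exact hτ _ (hreg.1 e) htr
  | @fwd s s' z z' e _ hδ _ _ hδz ih ihz ihz' =>
    have hz := hreg.2 z e z' hδz
    have hs := hreg.2 s e s' hδ
    rw [ihz, ihz'] at hz
    rw [ih, hz] at hs
    exact (Option.some_injective _ hs).symm

theorem apply_false_ne_some_true_of_mem {ω : Set Interaction}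
    (hω : ω ⊆ {iInp, iUsed, iFree}) :
    ∀ i ∈ ({iNop, iRes} ∪ ω : Set Interaction), i false ≠ some true := by
  intro i hi
  rcases hi with hi | hi
  · rcases hi with rfl | rfl <;> simp [iNop, iRes]
  · rcases hω hi with rfl | rfl | rfl <;> simp [iInp, iUsed, iFree]

end Minimality

section CanonicalRegion

variable {S E : Type} {A : TS S E} {Q : Set S}

theorem canonSup_eq_true_iff {s : S} : canonSup A Q s = true ↔ InCl A Q s := by
  simp [canonSup]

theorem canonSup_eq_true_of_delta {s s' : S} {e : E} (hδ : A.delta s e = some s')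
    (hs' : canonSup A Q s' = true) : canonSup A Q s = true :=
  canonSup_eq_true_iff.2 (InCl.back (canonSup_eq_true_iff.1 hs') hδ)

theorem canonSup_eq_false_of_exit {s s' t t' : S} {e : E}
    (ht : A.delta t e = some t') (hexit : canonSup A Q t = true ∧ canonSup A Q t' = false)
    (hδ : A.delta s e = some s') : canonSup A Q s' = false := by
  rw [← Bool.not_eq_true, canonSup_eq_true_iff]
  intro hs'
  have ht' := InCl.fwd (canonSup_eq_true_iff.1 hexit.1) ht (InCl.back hs' hδ) hs' hδ
  exact Bool.false_ne_true (hexit.2 ▸ canonSup_eq_true_iff.2 ht')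

theorem canonSup_eq_of_not_exit {s s' : S} {e : E} (hδ : A.delta s e = some s')
    (hstay : ¬ (canonSup A Q s = true ∧ canonSup A Q s' = false)) :
    canonSup A Q s = canonSup A Q s' := by
  cases hs' : canonSup A Q s'
  · cases hs : canonSup A Q s
    · rfl
    · exact absurd ⟨hs, hs'⟩ hstay
  · exact canonSup_eq_true_of_delta hδ hs'

theorem canonSig_mem {τ : Set Interaction} (hnop : iNop ∈ τ) (hres : iRes ∈ τ) (e : E) :
    canonSig A τ Q e ∈ τ := by
  unfold canonSig
  split_ifs with hused hfree hinp
  exacts [hused.1, hfree.1, hinp.1, hres, hres, hnop]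

theorem canonSig_apply_canonSup (τ : Set Interaction) {s s' : S} {e : E}
    (hδ : A.delta s e = some s') :
    canonSig A τ Q e (canonSup A Q s) = some (canonSup A Q s') := by
  unfold canonSig
  split_ifs with hused hfree hinp hres hpartial
  · obtain ⟨hs, hs'⟩ := hused.2 s s' hδ
    simp [iUsed, hs, hs']
  · obtain ⟨hs, hs'⟩ := hfree.2 s s' hδ
    simp [iFree, hs, hs']
  · obtain ⟨hs, hs'⟩ := hinp.2 s s' hδ
    simp [iInp, hs, hs']
  · simp [iRes, (hres.2 s s' hδ).2]
  · obtain ⟨⟨t, t', ht, hexit⟩, _⟩ := hpartial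
    simp [iRes, canonSup_eq_false_of_exit ht hexit hδ]
  · have hnot_all : ¬ ∀ s s', A.delta s e = some s' →
        canonSup A Q s = true ∧ canonSup A Q s' = false := fun hall =>
      (em (iInp ∈ τ)).elim (fun hi => hinp ⟨hi, hall⟩) (fun hi => hres ⟨hi, hall⟩)
    have hnone : ¬ (canonSup A Q s = true ∧ canonSup A Q s' = false) := fun hexit =>
      hpartial ⟨⟨s, s', hδ, hexit⟩, hnot_all⟩
    simp [iNop, canonSup_eq_of_not_exit hδ hnone]

theorem canonSig_isRegion {τ : Set Interaction} (hnop : iNop ∈ τ) (hres : iRes ∈ τ) :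
    IsRegion A τ (canonSup A Q) (canonSig A τ Q) :=
  ⟨canonSig_mem hnop hres, fun _ _ _ hδ => canonSig_apply_canonSup τ hδ⟩

end CanonicalRegion

theorem canonical_region_and_minimality_general {S E : Type}
    (A : TS S E)
    (ω : Set Interaction) (hω : ω ⊆ {iInp, iUsed, iFree})
    (Q : Set S) :
    IsRegion A ({iNop, iRes} ∪ ω) (canonSup A Q) (canonSig A ({iNop, iRes} ∪ ω) Q) ∧
    ∀ (sup' : S → Bool) (sig' : E → Interaction),
      IsRegion A ({iNop, iRes} ∪ ω) sup' sig' →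
      (∀ s ∈ Q, sup' s = true) →
      ∀ s : S, InCl A Q s → sup' s = true :=
  ⟨canonSig_isRegion (Or.inl (Or.inl rfl)) (Or.inl (Or.inr rfl)),
    fun _ _ hreg hQ _ hs => hs.sup_eq_true hreg (apply_false_ne_some_true_of_mem hω) hQ⟩

/-- the canonical pair on the closure of Q is a τ-region, and the
closure is contained in the support of every τ-region whose support contains Q. -/
theorem canonical_region_and_minimality {S E : Type} [Fintype S] [Fintype E]
    (A : TS S E) (hreach : Reachable A)
    (ω : Set Interaction) (hω : ω ⊆ {iInp, iUsed, iFree})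
    (Q : Set S) :
    IsRegion A ({iNop, iRes} ∪ ω) (canonSup A Q) (canonSig A ({iNop, iRes} ∪ ω) Q) ∧
    ∀ (sup' : S → Bool) (sig' : E → Interaction),
      IsRegion A ({iNop, iRes} ∪ ω) sup' sig' →
      (∀ s ∈ Q, sup' s = true) →
      ∀ s : S, InCl A Q s → sup' s = true :=
  canonical_region_and_minimality_general A ω hω Q
end

section
/- Let τ = {nop, res} ∪ ω be a type of nets with ω ⊆ {inp, used, free}, let A be a TS, and let e ∈ E and s ∈ S with ¬(s --e-->). Then e is τ-inhibitable at s if and only if at least one of the following holds: (1) inp ∈ τ and the canonical τ-region of the closure cl({z ∈ S : z --e-->}) satisfies sig(e) = inp and s ∉ cl({z : z --e-->}); (2) used ∈ τ and the canonical τ-region of the closure cl({z, z' ∈ S : z --e--> z'}) satisfies sig(e) = used and s ∉ cl({z, z' : z --e--> z'}); (3) free ∈ τ and the canonical τ-region of the closure cl({s}) satisfies sig(e) = free. -/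
/-!
For τ ⊆ {nop, res, inp, used, free} no interaction maps `0` to `1`, so the support of a
τ-region is closed under predecessors, and since every signature is a function it is also
closed under the forward rule of `cl`. Hence the support of a region inhibiting `e` at `s`
contains `cl(Q)` for the appropriate `Q` (the sources of `e` for `inp`, all states incident
to `e` for `used`, `{s}` for `free`), and agrees with `cl(Q)` on `s` and on the states
incident to `e`. The graphs of `inp`, `used` and `free` are disjoint, so whenever `e` occurs
this forces the canonical signature of `e` to be `sig e`. If `e` does not occur, both closures
of states incident to `e` are empty and the canonical signature of `e` is the first of `used`,
`free`, `inp` that lies in τ.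
-/
section InteractionFacts

variable {b c : Bool} {i j : Interaction} {τ : Set Interaction}

lemma iInp_eq_some : iInp b = some c ↔ b = true ∧ c = false := by
  cases b <;> cases c <;> simp [iInp]

lemma iUsed_eq_some : iUsed b = some c ↔ b = true ∧ c = true := by
  cases b <;> cases c <;> simp [iUsed]

lemma iFree_eq_some : iFree b = some c ↔ b = false ∧ c = false := by
  cases b <;> cases c <;> simp [iFree]

lemma iInp_eq_none : iInp b = none ↔ b = false := by
  cases b <;> simp [iInp]

lemma iUsed_eq_none : iUsed b = none ↔ b = false := by
  cases b <;> simp [iUsed]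

lemma iFree_eq_none : iFree b = none ↔ b = true := by
  cases b <;> simp [iFree]

lemma eq_of_apply_eq_some (hi : i ∈ ({iInp, iUsed, iFree} : Set Interaction))
    (hj : j ∈ ({iInp, iUsed, iFree} : Set Interaction)) (hib : i b = some c)
    (hjb : j b = some c) : i = j := by
  rcases hi with rfl | rfl | rfl <;> rcases hj with rfl | rfl | rfl <;>
    simp_all [iInp_eq_some, iUsed_eq_some, iFree_eq_some]

lemma eq_false_of_apply_false_eq_some (hτ : τ ⊆ {iNop, iRes, iInp, iUsed, iFree})
    (hi : i ∈ τ) (h : i false = some c) : c = false := by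
  rcases hτ hi with rfl | rfl | rfl | rfl | rfl <;> simp_all [iNop, iRes, iInp, iUsed, iFree]

lemma mem_of_apply_eq_none (hτ : τ ⊆ {iNop, iRes, iInp, iUsed, iFree}) (hi : i ∈ τ)
    (h : i b = none) : i ∈ ({iInp, iUsed, iFree} : Set Interaction) := by
  rcases hτ hi with rfl | rfl | h' <;> simp_all [iNop, iRes]

end InteractionFacts

namespace TS

variable {S E : Type}

def Compatible (A : TS S E) (sup : S → Bool) (e : E) (i : Interaction) : Prop :=
  ∀ z z', A.delta z e = some z' → i (sup z) = some (sup z')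

def sources (A : TS S E) (e : E) : Set S := {z | ∃ z', A.delta z e = some z'}

def incident (A : TS S E) (e : E) : Set S :=
  {z | (∃ z', A.delta z e = some z') ∨ (∃ z', A.delta z' e = some z)}

end TS

def CanonicallyInhibitable {S E : Type} (A : TS S E) (τ : Set Interaction) (e : E) (s : S) :
    Prop :=
  (iInp ∈ τ ∧ canonSig A τ (A.sources e) e = iInp ∧ ¬ InCl A (A.sources e) s) ∨
  (iUsed ∈ τ ∧ canonSig A τ (A.incident e) e = iUsed ∧ ¬ InCl A (A.incident e) s) ∨
  (iFree ∈ τ ∧ canonSig A τ {s} e = iFree)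

section Closure

variable {S E : Type} {A : TS S E} {τ : Set Interaction} {Q : Set S} {sup : S → Bool}
  {sig : E → Interaction} {e : E} {z z' w w' : S}

@[simp]
lemma canonSup_eq_true : canonSup A Q z = true ↔ InCl A Q z := by
  simp [canonSup]

@[simp]
lemma canonSup_eq_false : canonSup A Q z = false ↔ ¬ InCl A Q z := by
  simp [canonSup]

lemma not_inCl_empty : ¬ InCl A ∅ z := by
  intro h
  induction h with
  | base h => exact h
  | back _ _ ih => exact ih
  | fwd _ _ _ _ _ ih => exact ih

lemma not_inCl_of_exit (hw : A.delta w e = some w') (hwQ : InCl A Q w) (hw'Q : ¬ InCl A Q w')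
    (hz : A.delta z e = some z') : ¬ InCl A Q z' :=
  fun hz'Q => hw'Q (InCl.fwd hwQ hw (InCl.back hz'Q hz) hz'Q hz)

lemma IsRegion.sup_eq_true_of_inCl (hτ : τ ⊆ {iNop, iRes, iInp, iUsed, iFree})
    (hreg : IsRegion A τ sup sig) (hQ : ∀ q ∈ Q, sup q = true) (hz : InCl A Q z) :
    sup z = true := by
  induction hz with
  | base h => exact hQ _ h
  | @back x x' f _ hx ih =>
    by_contra hx'
    have hstep := hreg.2 x' f x hx
    rw [Bool.not_eq_true] at hx'
    rw [hx', ih] at hstep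
    exact absurd (eq_false_of_apply_false_eq_some hτ (hreg.1 f) hstep) (by simp)
  | @fwd x x' y y' f _ hx _ _ hy ihx ihy ihy' =>
    have hyy := hreg.2 y f y' hy
    have hxx := hreg.2 x f x' hx
    rw [ihy, ihy'] at hyy
    rw [ihx, hyy] at hxx
    exact (Option.some_injective _ hxx).symm

lemma IsRegion.canonSup_eq (hτ : τ ⊆ {iNop, iRes, iInp, iUsed, iFree})
    (hreg : IsRegion A τ sup sig) (hQ : ∀ q ∈ Q, sup q = true) (hz : sup z = true → z ∈ Q) :
    canonSup A Q z = sup z := by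
  cases h : sup z
  · exact canonSup_eq_false.2 fun hin => by simpa [h] using hreg.sup_eq_true_of_inCl hτ hQ hin
  · exact canonSup_eq_true.2 (InCl.base (hz h))

end Closure

section Canonical

variable {S E : Type} {A : TS S E} {τ : Set Interaction} {Q : Set S} {e : E} {i : Interaction}

open Classical in
lemma canonSig_eq_ite : canonSig A τ Q e =
    if iUsed ∈ τ ∧ A.Compatible (canonSup A Q) e iUsed then iUsed
    else if iFree ∈ τ ∧ A.Compatible (canonSup A Q) e iFree then iFree
    else if iInp ∈ τ ∧ A.Compatible (canonSup A Q) e iInp then iInp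
    else if iInp ∉ τ ∧ A.Compatible (canonSup A Q) e iInp then iRes
    else if (∃ z z', A.delta z e = some z' ∧ canonSup A Q z = true ∧ canonSup A Q z' = false) ∧
        ¬ A.Compatible (canonSup A Q) e iInp then iRes
    else iNop := by
  simp only [canonSig, TS.Compatible, iUsed_eq_some, iFree_eq_some, iInp_eq_some]

lemma isRegion_canonSup_canonSig (hnop : iNop ∈ τ) (hres : iRes ∈ τ) :
    IsRegion A τ (canonSup A Q) (canonSig A τ Q) := by
  refine ⟨fun f => ?_, fun z f z' hz => ?_⟩ <;> rw [canonSig_eq_ite] <;>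
    split_ifs with hused hfree hinp hres' hpartial
  · exact hused.1
  · exact hfree.1
  · exact hinp.1
  · exact hres
  · exact hres
  · exact hnop
  · exact hused.2 z z' hz
  · exact hfree.2 z z' hz
  · exact hinp.2 z z' hz
  · simp [iRes, (iInp_eq_some.1 (hres'.2 z z' hz)).2]
  · obtain ⟨⟨w, w', hw, hwQ, hw'Q⟩, -⟩ := hpartial
    simp [iRes, not_inCl_of_exit hw (canonSup_eq_true.1 hwQ) (canonSup_eq_false.1 hw'Q) hz]
  · have hno_exit : ¬ ∃ w w', A.delta w f = some w' ∧ canonSup A Q w = true ∧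
        canonSup A Q w' = false := fun hexit => hpartial ⟨hexit, fun hc => by
      by_cases h : iInp ∈ τ
      exacts [hinp ⟨h, hc⟩, hres' ⟨h, hc⟩]⟩
    have : canonSup A Q z' = canonSup A Q z := by
      cases hzQ : canonSup A Q z
      · exact canonSup_eq_false.2 fun hz'Q => by simp_all [InCl.back hz'Q hz]
      · by_contra hz'Q
        exact hno_exit ⟨z, z', hz, hzQ, by simpa using hz'Q⟩
    simp [iNop, this]

lemma canonSig_eq_of_compatible (hi : i ∈ ({iInp, iUsed, iFree} : Set Interaction)) (hiτ : i ∈ τ)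
    (hc : A.Compatible (canonSup A Q) e i) {z z' : S} (hz : A.delta z e = some z') :
    canonSig A τ Q e = i := by
  have huniq : ∀ j ∈ ({iInp, iUsed, iFree} : Set Interaction),
      A.Compatible (canonSup A Q) e j → j = i :=
    fun j hj hjc => eq_of_apply_eq_some hj hi (hjc z z' hz) (hc z z' hz)
  rw [canonSig_eq_ite]
  split_ifs with hused hfree hinp hres
  · exact huniq _ (by simp) hused.2
  · exact huniq _ (by simp) hfree.2
  · exact huniq _ (by simp) hinp.2
  · exact absurd (huniq _ (by simp) hres.2 ▸ hiτ) hres.1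
  all_goals rcases hi with rfl | rfl | rfl <;> tauto

open Classical in
lemma canonSig_eq_of_forall_eq_none (hno : ∀ z, A.delta z e = none) : canonSig A τ Q e =
    if iUsed ∈ τ then iUsed else if iFree ∈ τ then iFree else if iInp ∈ τ then iInp else iRes := by
  have hc : ∀ sup i, A.Compatible sup e i := fun _ _ z _ hz => by simp [hno z] at hz
  rw [canonSig_eq_ite]
  split_ifs <;> simp_all

end Canonical

section Characterization

variable {S E : Type} {A : TS S E} {τ : Set Interaction} {sup : S → Bool}
  {sig : E → Interaction} {e : E} {s z z' : S}

lemma IsRegion.canonSig_eq (hτ : τ ⊆ {iNop, iRes, iInp, iUsed, iFree})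
    (hreg : IsRegion A τ sup sig) (hpart : sig e ∈ ({iInp, iUsed, iFree} : Set Interaction))
    {Q : Set S} (hQ : ∀ q ∈ Q, sup q = true) (hQe : ∀ x ∈ A.incident e, sup x = true → x ∈ Q)
    (hz : A.delta z e = some z') : canonSig A τ Q e = sig e := by
  refine canonSig_eq_of_compatible hpart (hreg.1 e) (fun x x' hx => ?_) hz
  rw [hreg.canonSup_eq hτ hQ (hQe x (Or.inl ⟨x', hx⟩)),
    hreg.canonSup_eq hτ hQ (hQe x' (Or.inr ⟨x, hx⟩))]
  exact hreg.2 x e x' hx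

lemma canonicallyInhibitable_of_isRegion (hτ : τ ⊆ {iNop, iRes, iInp, iUsed, iFree})
    (hreg : IsRegion A τ sup sig) (hinh : sig e (sup s) = none) (hz : A.delta z e = some z') :
    CanonicallyInhibitable A τ e s := by
  have hpart := mem_of_apply_eq_none hτ (hreg.1 e) hinh
  have hstep := fun x x' (hx : A.delta x e = some x') => hreg.2 x e x' hx
  rcases hpart with h | h | h <;> rw [h] at hinh hstep
  · have hs : sup s = false := iInp_eq_none.1 hinh
    have hQ : ∀ q ∈ A.sources e, sup q = true :=
      fun q ⟨q', hq⟩ => (iInp_eq_some.1 (hstep q q' hq)).1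
    refine Or.inl ⟨h ▸ hreg.1 e, (hreg.canonSig_eq hτ (by simp [h]) hQ ?_ hz).trans h,
      fun hin => absurd (hreg.sup_eq_true_of_inCl hτ hQ hin) (by simp [hs])⟩
    rintro x (hx | ⟨x₀, hx⟩) hxs
    · exact hx
    · simp [(iInp_eq_some.1 (hstep x₀ x hx)).2] at hxs
  · have hs : sup s = false := iUsed_eq_none.1 hinh
    have hQ : ∀ q ∈ A.incident e, sup q = true := by
      rintro q (⟨q', hq⟩ | ⟨q', hq⟩)
      exacts [(iUsed_eq_some.1 (hstep q q' hq)).1, (iUsed_eq_some.1 (hstep q' q hq)).2]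
    refine Or.inr (Or.inl ⟨h ▸ hreg.1 e,
      (hreg.canonSig_eq hτ (by simp [h]) hQ (fun x hx _ => hx) hz).trans h,
      fun hin => absurd (hreg.sup_eq_true_of_inCl hτ hQ hin) (by simp [hs])⟩)
  · have hs : sup s = true := iFree_eq_none.1 hinh
    have hQ : ∀ q ∈ ({s} : Set S), sup q = true := fun q hq => hq ▸ hs
    refine Or.inr (Or.inr ⟨h ▸ hreg.1 e, (hreg.canonSig_eq hτ (by simp [h]) hQ ?_ hz).trans h⟩)
    rintro x (⟨x', hx⟩ | ⟨x₀, hx⟩) hxs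
    · simp [(iFree_eq_some.1 (hstep x x' hx)).1] at hxs
    · simp [(iFree_eq_some.1 (hstep x₀ x hx)).2] at hxs

lemma canonicallyInhibitable_of_forall_eq_none (hno : ∀ z, A.delta z e = none)
    (hτ : iInp ∈ τ ∨ iUsed ∈ τ ∨ iFree ∈ τ) : CanonicallyInhibitable A τ e s := by
  have hsources : A.sources e = ∅ := by simp [TS.sources, hno]
  have hincident : A.incident e = ∅ := by simp [TS.incident, hno]
  simp only [CanonicallyInhibitable, hsources, hincident, canonSig_eq_of_forall_eq_none hno]
  split_ifs <;> simp_all [not_inCl_empty]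

lemma inhibitable_of_canonicallyInhibitable (hnop : iNop ∈ τ) (hres : iRes ∈ τ)
    (h : CanonicallyInhibitable A τ e s) : Inhibitable A τ e s := by
  rcases h with ⟨-, hsig, hs⟩ | ⟨-, hsig, hs⟩ | ⟨-, hsig⟩
  · exact ⟨_, _, isRegion_canonSup_canonSig (Q := A.sources e) hnop hres, by simp [hsig, hs, iInp]⟩
  · exact ⟨_, _, isRegion_canonSup_canonSig (Q := A.incident e) hnop hres,
      by simp [hsig, hs, iUsed]⟩
  · exact ⟨_, _, isRegion_canonSup_canonSig (Q := {s}) hnop hres,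
      by simp [hsig, iFree, InCl.base (Set.mem_singleton s)]⟩

end Characterization

theorem inhibitable_iff_canonical_general {S E : Type}
    (A : TS S E)
    (ω : Set Interaction) (hω : ω ⊆ {iInp, iUsed, iFree})
    (e : E) (s : S) :
    Inhibitable A ({iNop, iRes} ∪ ω) e s ↔
      ((iInp ∈ ({iNop, iRes} ∪ ω : Set Interaction) ∧
        canonSig A ({iNop, iRes} ∪ ω) {z | ∃ z', A.delta z e = some z'} e = iInp ∧
        ¬ InCl A {z | ∃ z', A.delta z e = some z'} s) ∨
       (iUsed ∈ ({iNop, iRes} ∪ ω : Set Interaction) ∧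
        canonSig A ({iNop, iRes} ∪ ω)
          {z | (∃ z', A.delta z e = some z') ∨ (∃ z', A.delta z' e = some z)} e = iUsed ∧
        ¬ InCl A {z | (∃ z', A.delta z e = some z') ∨ (∃ z', A.delta z' e = some z)} s) ∨
       (iFree ∈ ({iNop, iRes} ∪ ω : Set Interaction) ∧
        canonSig A ({iNop, iRes} ∪ ω) {s} e = iFree)) := by
  have hτ : {iNop, iRes} ∪ ω ⊆ {iNop, iRes, iInp, iUsed, iFree} :=
    Set.union_subset (by intro; simp; tauto) (hω.trans (by intro; simp; tauto))
  refine ⟨fun ⟨sup, sig, hreg, hinh⟩ => ?_,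
    inhibitable_of_canonicallyInhibitable (by simp) (by simp)⟩
  by_cases hstep : ∃ z z', A.delta z e = some z'
  · obtain ⟨z, z', hz⟩ := hstep
    exact canonicallyInhibitable_of_isRegion hτ hreg hinh hz
  · refine canonicallyInhibitable_of_forall_eq_none
      (fun z => Option.eq_none_iff_forall_ne_some.2 fun z' hz => hstep ⟨z, z', hz⟩) ?_
    rcases mem_of_apply_eq_none hτ (hreg.1 e) hinh with h | h | h <;> rw [← h] <;>
      simp [hreg.1 e]

/-- characterization of τ-inhibitability via canonical regions,
for τ = {nop, res} ∪ ω with ω ⊆ {inp, used, free}. -/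
theorem inhibitable_iff_canonical {S E : Type} [Fintype S] [Fintype E]
    (A : TS S E) (hreach : Reachable A)
    (ω : Set Interaction) (hω : ω ⊆ {iInp, iUsed, iFree})
    (e : E) (s : S) (hnotstep : A.delta s e = none) :
    Inhibitable A ({iNop, iRes} ∪ ω) e s ↔
      ((iInp ∈ ({iNop, iRes} ∪ ω : Set Interaction) ∧
        canonSig A ({iNop, iRes} ∪ ω) {z | ∃ z', A.delta z e = some z'} e = iInp ∧
        ¬ InCl A {z | ∃ z', A.delta z e = some z'} s) ∨
       (iUsed ∈ ({iNop, iRes} ∪ ω : Set Interaction) ∧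
        canonSig A ({iNop, iRes} ∪ ω)
          {z | (∃ z', A.delta z e = some z') ∨ (∃ z', A.delta z' e = some z)} e = iUsed ∧
        ¬ InCl A {z | (∃ z', A.delta z e = some z') ∨ (∃ z', A.delta z' e = some z)} s) ∨
       (iFree ∈ ({iNop, iRes} ∪ ω : Set Interaction) ∧
        canonSig A ({iNop, iRes} ∪ ω) {s} e = iFree)) :=
  inhibitable_iff_canonical_general A ω hω e s
end

section
/- Let τ = {nop, res} ∪ ω be a type of nets with ω ⊆ {inp, used, free} and let A be a TS. Two distinct states s, s' ∈ S are τ-separable if and only if s' ∉ cl({s}) or s ∉ cl({s'}). -/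
variable {S E : Type} {A : TS S E}

lemma InCl.fwd_of_mem_target {Q : Set S} {x x' z z' : S} {e : E} (hz : InCl A Q z)
    (hze : A.delta z e = some z') (hx' : InCl A Q x') (hxe : A.delta x e = some x') :
    InCl A Q z' :=
  InCl.fwd hz hze (InCl.back hx' hxe) hx' hxe

/-- Backward steps cannot leave the 1-states since no interaction lifts 0 to 1, and an event
that keeps one state at 1 keeps every 1-state at 1. -/
lemma IsRegion.sup_eq_true_of_inCl_s9 {τ : Set Interaction} {sup : S → Bool} {sig : E → Interaction}
    (hreg : IsRegion A τ sup sig) (hτ : ∀ g ∈ τ, g false ≠ some true) {Q : Set S}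
    (hQ : ∀ q ∈ Q, sup q = true) {x : S} (hx : InCl A Q x) : sup x = true := by
  induction hx with
  | base hq => exact hQ _ hq
  | @back t t' e _ hd ih =>
    have h := hreg.2 _ _ _ hd
    rw [ih] at h
    cases hb : sup t'
    · exact absurd (hb ▸ h) (hτ _ (hreg.1 e))
    · rfl
  | @fwd t t' z z' e _ hd _ _ hzd iht ihz ihz' =>
    have hz := hreg.2 _ _ _ hzd
    have ht := hreg.2 _ _ _ hd
    rw [ihz, ihz'] at hz
    rw [iht, hz] at ht
    exact (Option.some_inj.mp ht).symm

lemma ne_some_true_of_mem {ω : Set Interaction} (hω : ω ⊆ {iInp, iUsed, iFree})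
    {g : Interaction} (hg : g ∈ ({iNop, iRes} ∪ ω : Set Interaction)) : g false ≠ some true := by
  rcases hg with (rfl | rfl) | hg
  · decide
  · decide
  · rcases hω hg with rfl | rfl | rfl <;> decide

open Classical in
noncomputable def closureSig (A : TS S E) (Q : Set S) : E → Interaction :=
  fun e => if ∃ z z', A.delta z e = some z' ∧ InCl A Q z ∧ ¬ InCl A Q z' then iRes else iNop

/-- By the forward rule of `cl(Q)`, once one `e`-transition leaves `cl(Q)`, every `e`-transition
ends outside it; otherwise `e` preserves membership in `cl(Q)`, which is closed under backward
steps. -/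
lemma isRegion_canonSup_closureSig {τ : Set Interaction} (hnop : iNop ∈ τ) (hres : iRes ∈ τ)
    (Q : Set S) : IsRegion A τ (canonSup A Q) (closureSig A Q) := by
  refine ⟨fun e => ?_, fun x e x' hd => ?_⟩
  · unfold closureSig
    split_ifs
    exacts [hres, hnop]
  · unfold closureSig
    split_ifs with hexit
    · obtain ⟨z, z', hzd, hz, hz'⟩ := hexit
      have hx' : ¬ InCl A Q x' := fun hx' => hz' (hz.fwd_of_mem_target hzd hx' hd)
      simp [iRes, canonSup, hx']
    · push Not at hexit
      have hiff : InCl A Q x ↔ InCl A Q x' := ⟨hexit x x' hd, fun hx' => hx'.back hd⟩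
      simp [iNop, canonSup, hiff]

lemma separable_of_not_inCl_singleton {τ : Set Interaction} (hnop : iNop ∈ τ) (hres : iRes ∈ τ)
    {s s' : S} (h : ¬ InCl A {s} s') : Separable A τ s s' :=
  ⟨canonSup A {s}, closureSig A {s}, isRegion_canonSup_closureSig hnop hres {s},
    by simp [canonSup, InCl.base, h]⟩

lemma Separable.symm {τ : Set Interaction} {s s' : S} (h : Separable A τ s s') :
    Separable A τ s' s :=
  let ⟨sup, sig, hreg, hne⟩ := h
  ⟨sup, sig, hreg, hne.symm⟩

theorem separable_iff_closure_general {S E : Type}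
    (A : TS S E)
    (ω : Set Interaction) (hω : ω ⊆ {iInp, iUsed, iFree})
    (s s' : S) :
    Separable A ({iNop, iRes} ∪ ω) s s' ↔
      (¬ InCl A {s} s' ∨ ¬ InCl A {s'} s) := by
  have hnop : iNop ∈ ({iNop, iRes} ∪ ω : Set Interaction) := by simp
  have hres : iRes ∈ ({iNop, iRes} ∪ ω : Set Interaction) := by simp
  constructor
  · rintro ⟨sup, sig, hreg, hsep⟩
    by_contra! ⟨hs', hs⟩
    have hup {q x : S} (hx : InCl A {q} x) (hq : sup q = true) : sup x = true :=
      hreg.sup_eq_true_of_inCl_s9 (fun g hg => ne_some_true_of_mem hω hg) (by simpa using hq) hx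
    exact hsep (Bool.eq_iff_iff.mpr ⟨hup hs', hup hs⟩)
  · rintro (h | h)
    · exact separable_of_not_inCl_singleton hnop hres h
    · exact (separable_of_not_inCl_singleton hnop hres h).symm

/-- separability characterization via closures,
for τ = {nop, res} ∪ ω with ω ⊆ {inp, used, free}. -/
theorem separable_iff_closure {S E : Type} [Fintype S] [Fintype E]
    (A : TS S E) (hreach : Reachable A)
    (ω : Set Interaction) (hω : ω ⊆ {iInp, iUsed, iFree})
    (s s' : S) (hne : s ≠ s') :
    Separable A ({iNop, iRes} ∪ ω) s s' ↔
      (¬ InCl A {s} s' ∨ ¬ InCl A {s'} s) :=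
  separable_iff_closure_general A ω hω s s'
end

section
/- Let τ = {nop, swap} ∪ ω be a type of nets with ω ⊆ {inp, out, used, free} and let A be a TS. If (sup, sig) is a τ-region of A, then (sup', sig') is also a τ-region of A, where sup'(s) = 1 − sup(s) for every state s, and sig'(e) = swap if sig(e) ∈ {inp, out, swap} and sig'(e) = nop if sig(e) ∈ {nop, used, free}. -/
/-! Each interaction of `{nop, swap, inp, out, used, free}` either keeps the bit wherever it is
defined (nop, used, free) or flips it (swap, inp, out). Complementing the support preserves both
relations between the bits before and after a transition, so the keeping interactions can be
replaced by `nop` and the flipping ones by `swap`. -/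

open Classical in
def complementSig (i : Interaction) : Interaction :=
  if i = iInp ∨ i = iOut ∨ i = iSwap then iSwap else iNop

lemma complementSig_eq_iNop_or_iSwap (i : Interaction) :
    complementSig i = iNop ∨ complementSig i = iSwap := by
  unfold complementSig
  split_ifs <;> simp

lemma complementSig_apply_not {i : Interaction}
    (hi : i ∈ ({iNop, iSwap, iInp, iOut, iUsed, iFree} : Set Interaction))
    {b b' : Bool} (h : i b = some b') : complementSig i (!b) = some (!b') := by
  simp only [Set.mem_insert_iff, Set.mem_singleton_iff] at hi
  revert b b'
  rcases hi with rfl | rfl | rfl | rfl | rfl | rfl <;> decide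

lemma IsRegion.complement {S E : Type} {A : TS S E} {τ : Set Interaction}
    (hτ : τ ⊆ {iNop, iSwap, iInp, iOut, iUsed, iFree}) (hnop : iNop ∈ τ) (hswap : iSwap ∈ τ)
    {sup : S → Bool} {sig : E → Interaction} (hreg : IsRegion A τ sup sig) :
    IsRegion A τ (fun s => !(sup s)) (fun e => complementSig (sig e)) := by
  obtain ⟨hsig, htrans⟩ := hreg
  refine ⟨fun e => ?_, fun s e s' hs => complementSig_apply_not (hτ (hsig e)) (htrans s e s' hs)⟩
  rcases complementSig_eq_iNop_or_iSwap (sig e) with h | h <;> simp only [h, hnop, hswap]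

open Classical in
theorem complement_region_general {S E : Type}
    (A : TS S E)
    (ω : Set Interaction) (hω : ω ⊆ {iInp, iOut, iUsed, iFree})
    (sup : S → Bool) (sig : E → Interaction)
    (hreg : IsRegion A ({iNop, iSwap} ∪ ω) sup sig) :
    IsRegion A ({iNop, iSwap} ∪ ω) (fun s => !(sup s))
      (fun e => if sig e = iInp ∨ sig e = iOut ∨ sig e = iSwap then iSwap else iNop) := by
  have hτ : {iNop, iSwap} ∪ ω ⊆ ({iNop, iSwap, iInp, iOut, iUsed, iFree} : Set Interaction) :=
    Set.union_subset (by grind) (hω.trans (by grind))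
  exact hreg.complement hτ (by simp) (by simp)

open Classical in
/-- complementing a region for τ = {nop, swap} ∪ ω, ω ⊆ {inp, out, used, free}. -/
theorem complement_region {S E : Type} [Fintype S] [Fintype E]
    (A : TS S E) (hreach : Reachable A)
    (ω : Set Interaction) (hω : ω ⊆ {iInp, iOut, iUsed, iFree})
    (sup : S → Bool) (sig : E → Interaction)
    (hreg : IsRegion A ({iNop, iSwap} ∪ ω) sup sig) :
    IsRegion A ({iNop, iSwap} ∪ ω) (fun s => !(sup s))
      (fun e => if sig e = iInp ∨ sig e = iOut ∨ sig e = iSwap then iSwap else iNop) :=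
  complement_region_general A ω hω sup sig hreg
end

section
/- Let A be a TS, let T be a spanning tree of A rooted at s0, and for every state s let ψ_s : E → 𝔽₂ assign to each event e the parity of the number of occurrences of e on the unique T-path from s0 to s. If (sup, sig) is a region of A whose signature takes values in {nop, swap}, then ρ : E → 𝔽₂ defined by ρ(e) = 1 if sig(e) = swap and ρ(e) = 0 if sig(e) = nop satisfies the chord equation ρ(e) + Σ_{e' ∈ E} (ψ_s(e') + ψ_{s'}(e'))·ρ(e') = 0 in 𝔽₂ for every chord s --e--> s' of A (a transition not in T), and moreover sup(s) = sup(s0) + Σ_{e ∈ E} ψ_s(e)·ρ(e) in 𝔽₂ for every state s. -/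
/-! Spanning trees and path parities.  A transition is a triple (s, e, s') with
δ(s, e) = s'.  `IsPathFrom T s l t` states that `l` is a directed path from `s`
to `t` consisting of transitions from `T`. -/

def IsPathFrom {S E : Type} (T : Set (S × E × S)) : S → List (S × E × S) → S → Prop
  | s, [], t => s = t
  | s, a :: l, t => a.1 = s ∧ a ∈ T ∧ IsPathFrom T a.2.2 l t

/-! A region whose signature lies in {nop, swap} is an additive potential over 𝔽₂: along each
transition `s --e--> s'` the support changes by `ρ(e)`. Summing these increments along the tree
path to `s` gives `sup(s) = sup(s₀) + Σ ψ_s(e) ρ(e)`, and comparing the two endpoints of a chord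
`s --e--> s'` with `sup(s') = sup(s) + ρ(e)` gives the chord equation, since `x + x = 0` in 𝔽₂. -/

theorem iNop_ne_iSwap : iNop ≠ iSwap := fun h => by
  simpa [iNop, iSwap] using congrFun h false

theorem List.sum_map_comp_eq_sum_countP_mul {α E R : Type} [Fintype E] [DecidableEq E]
    [Semiring R] (f : α → E) (ρ : E → R) (l : List α) :
    (l.map (ρ ∘ f)).sum = ∑ e, (l.countP (fun a => decide (f a = e)) : R) * ρ e := by
  induction l with
  | nil => simp
  | cons a l ih =>
    simp only [List.map_cons, List.sum_cons, ih, List.countP_cons, decide_eq_true_eq,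
      Nat.cast_add, Nat.cast_ite, Nat.cast_one, Nat.cast_zero, add_mul, ite_mul, one_mul,
      zero_mul, Finset.sum_add_distrib, Finset.sum_ite_eq, Finset.mem_univ, if_true,
      Function.comp_apply]
    rw [add_comm]

theorem IsPathFrom.eq_add_sum_map {S E R : Type} [AddMonoid R] {T : Set (S × E × S)}
    (b : S → R) (ρ : E → R) (hb : ∀ a ∈ T, b a.2.2 = b a.1 + ρ a.2.1) :
    ∀ {s t : S} {l : List (S × E × S)}, IsPathFrom T s l t →
      b t = b s + (l.map (fun a => ρ a.2.1)).sum
  | _, _, [], rfl => by simp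
  | _, _, a :: _, ⟨rfl, ha, hl⟩ => by
    rw [IsPathFrom.eq_add_sum_map b ρ hb hl, hb a ha, List.map_cons, List.sum_cons, add_assoc]

section NopSwapRegion

variable {S E : Type} {A : TS S E} {sup : S → Bool} {sig : E → Interaction}

theorem IsRegion.nop_swap_step (hreg : IsRegion A {iNop, iSwap} sup sig) {s s' : S} {e : E}
    (h : A.delta s e = some s') :
    (if sup s' then (1 : ZMod 2) else 0) =
      (if sup s then 1 else 0) + if sig e = iSwap then 1 else 0 := by
  have hstep := hreg.2 s e s' h
  rcases hreg.1 e with hsig | hsig <;> rw [hsig] at hstep ⊢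
  · rw [← (Option.some.inj hstep : sup s = sup s')]
    simp [iNop_ne_iSwap]
  · rw [← (Option.some.inj hstep : (!sup s) = sup s')]
    cases sup s <;> decide

theorem IsRegion.nop_swap_sup_eq [Fintype E] [DecidableEq E]
    (hreg : IsRegion A {iNop, iSwap} sup sig) {T : Set (S × E × S)}
    (hT : ∀ a ∈ T, A.delta a.1 a.2.1 = some a.2.2)
    (hpath : ∀ s : S, ∃ l, IsPathFrom T A.init l s) (ψ : S → E → ZMod 2)
    (hψ : ∀ (s : S) (l : List (S × E × S)), IsPathFrom T A.init l s →
      ∀ e : E, ψ s e = (l.countP (fun a => decide (a.2.1 = e)) : ZMod 2))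
    (s : S) :
    (if sup s then (1 : ZMod 2) else 0) =
      (if sup A.init then (1 : ZMod 2) else 0) +
        ∑ e : E, ψ s e * (if sig e = iSwap then (1 : ZMod 2) else 0) := by
  obtain ⟨l, hl⟩ := hpath s
  simp only [hψ s l hl]
  rw [← List.sum_map_comp_eq_sum_countP_mul (fun a : S × E × S => a.2.1)]
  exact hl.eq_add_sum_map (fun s => if sup s then 1 else 0)
    (fun e => if sig e = iSwap then 1 else 0) fun a ha => hreg.nop_swap_step (hT a ha)

end NopSwapRegion

theorem chord_equations_from_region_general {S E : Type} [Fintype E] [DecidableEq E]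
    (A : TS S E)
    (T : Set (S × E × S))
    (hT : ∀ a ∈ T, A.delta a.1 a.2.1 = some a.2.2)
    (htree : ∀ s : S, ∃! l : List (S × E × S), IsPathFrom T A.init l s)
    (ψ : S → E → ZMod 2)
    (hψ : ∀ (s : S) (l : List (S × E × S)), IsPathFrom T A.init l s →
      ∀ e : E, ψ s e = (l.countP (fun a => decide (a.2.1 = e)) : ZMod 2))
    (sup : S → Bool) (sig : E → Interaction)
    (hreg : IsRegion A {iNop, iSwap} sup sig) :
    (∀ (s : S) (e : E) (s' : S), A.delta s e = some s' → (s, e, s') ∉ T →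
      (if sig e = iSwap then (1 : ZMod 2) else 0) +
        ∑ e' : E, (ψ s e' + ψ s' e') *
          (if sig e' = iSwap then (1 : ZMod 2) else 0) = 0) ∧
    ∀ s : S, (if sup s then (1 : ZMod 2) else 0) =
      (if sup A.init then (1 : ZMod 2) else 0) +
        ∑ e : E, ψ s e * (if sig e = iSwap then (1 : ZMod 2) else 0) := by
  have hsup := hreg.nop_swap_sup_eq hT (fun s => (htree s).exists) ψ hψ
  refine ⟨fun s e s' hstep _ => ?_, hsup⟩
  have hsup_step := hreg.nop_swap_step hstep
  have htwo : (2 : ZMod 2) = 0 := rfl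
  simp only [add_mul, Finset.sum_add_distrib]
  rw [eq_sub_of_add_eq' (hsup s).symm, eq_sub_of_add_eq' (hsup s').symm]
  linear_combination hsup_step + ((if sig e = iSwap then 1 else 0) + (if sup s then 1 else 0) -
    if sup A.init then 1 else 0) * htwo

/-- every region with signature values in {nop, swap} induces a
solution ρ of all chord equations (ρ(e) = 1 iff sig(e) = swap), and its support
satisfies sup(s) = sup(s0) + Σ_{e} ψ_s(e)·ρ(e) over 𝔽₂. -/
theorem chord_equations_from_region {S E : Type} [Fintype S] [Fintype E] [DecidableEq E]
    (A : TS S E) (hreach : Reachable A)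
    (T : Set (S × E × S))
    (hT : ∀ a ∈ T, A.delta a.1 a.2.1 = some a.2.2)
    (htree : ∀ s : S, ∃! l : List (S × E × S), IsPathFrom T A.init l s)
    (ψ : S → E → ZMod 2)
    (hψ : ∀ (s : S) (l : List (S × E × S)), IsPathFrom T A.init l s →
      ∀ e : E, ψ s e = (l.countP (fun a => decide (a.2.1 = e)) : ZMod 2))
    (sup : S → Bool) (sig : E → Interaction)
    (hreg : IsRegion A {iNop, iSwap} sup sig) :
    (∀ (s : S) (e : E) (s' : S), A.delta s e = some s' → (s, e, s') ∉ T →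
      (if sig e = iSwap then (1 : ZMod 2) else 0) +
        ∑ e' : E, (ψ s e' + ψ s' e') *
          (if sig e' = iSwap then (1 : ZMod 2) else 0) = 0) ∧
    ∀ s : S, (if sup s then (1 : ZMod 2) else 0) =
      (if sup A.init then (1 : ZMod 2) else 0) +
        ∑ e : E, ψ s e * (if sig e = iSwap then (1 : ZMod 2) else 0) :=
  chord_equations_from_region_general A T hT htree ψ hψ sup sig hreg
end

section
/- Let τ = {nop, swap} ∪ ω be a type of nets with ω ⊆ {inp, out, used, free} and let A be a TS. Two distinct states s, s' of A are τ-separable if and only if they are {nop, swap}-separable. -/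
/-!
Each of inp, out, used, free is a restriction of swap or nop as a partial function on {0,1}
(inp and out of swap, used and free of nop). Replacing every signature of a τ-region by the
nop or swap it restricts keeps the support and yields a {nop, swap}-region, so any τ-separation
is a {nop, swap}-separation; the converse holds since {nop, swap} ⊆ τ.
-/

namespace Interaction

def Restricts (i j : Interaction) : Prop :=
  ∀ b b', i b = some b' → j b = some b'

theorem Restricts.refl (i : Interaction) : i.Restricts i := fun _ _ h => h

theorem inp_restricts_swap : iInp.Restricts iSwap := by
  rintro (_ | _) b' h <;> simp_all [iInp, iSwap]

theorem out_restricts_swap : iOut.Restricts iSwap := by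
  rintro (_ | _) b' h <;> simp_all [iOut, iSwap]

theorem used_restricts_nop : iUsed.Restricts iNop := by
  rintro (_ | _) b' h <;> simp_all [iUsed, iNop]

theorem free_restricts_nop : iFree.Restricts iNop := by
  rintro (_ | _) b' h <;> simp_all [iFree, iNop]

theorem exists_nop_swap_restricts {i : Interaction}
    (hi : i ∈ ({iNop, iSwap, iInp, iOut, iUsed, iFree} : Set Interaction)) :
    ∃ j ∈ ({iNop, iSwap} : Set Interaction), i.Restricts j := by
  rcases hi with rfl | rfl | rfl | rfl | rfl | rfl
  · exact ⟨iNop, by simp, Restricts.refl _⟩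
  · exact ⟨iSwap, by simp, Restricts.refl _⟩
  · exact ⟨iSwap, by simp, inp_restricts_swap⟩
  · exact ⟨iSwap, by simp, out_restricts_swap⟩
  · exact ⟨iNop, by simp, used_restricts_nop⟩
  · exact ⟨iNop, by simp, free_restricts_nop⟩

end Interaction

section Regions

variable {S E : Type} {A : TS S E} {τ τ' : Set Interaction}

theorem IsRegion.mono (hττ' : τ ⊆ τ') {sup : S → Bool} {sig : E → Interaction}
    (h : IsRegion A τ sup sig) : IsRegion A τ' sup sig :=
  ⟨fun e => hττ' (h.1 e), h.2⟩

theorem Separable.mono (hττ' : τ ⊆ τ') {s s' : S} (h : Separable A τ s s') :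
    Separable A τ' s s' :=
  let ⟨sup, sig, hreg, hsep⟩ := h
  ⟨sup, sig, hreg.mono hττ', hsep⟩

theorem IsRegion.exists_of_forall_restricts (hττ' : ∀ i ∈ τ, ∃ j ∈ τ', i.Restricts j)
    {sup : S → Bool} {sig : E → Interaction} (h : IsRegion A τ sup sig) :
    ∃ sig', IsRegion A τ' sup sig' := by
  choose f hfτ' hrestricts using hττ'
  exact ⟨fun e => f (sig e) (h.1 e), fun e => hfτ' _ _,
    fun s e s' hs => hrestricts _ _ _ _ (h.2 s e s' hs)⟩

theorem Separable.of_forall_restricts (hττ' : ∀ i ∈ τ, ∃ j ∈ τ', i.Restricts j) {s s' : S}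
    (h : Separable A τ s s') : Separable A τ' s s' :=
  let ⟨sup, _, hreg, hsep⟩ := h
  let ⟨sig', hreg'⟩ := hreg.exists_of_forall_restricts hττ'
  ⟨sup, sig', hreg', hsep⟩

end Regions

theorem separable_iff_nop_swap_separable_general {S E : Type}
    (A : TS S E)
    (ω : Set Interaction) (hω : ω ⊆ {iInp, iOut, iUsed, iFree})
    (s s' : S) :
    Separable A ({iNop, iSwap} ∪ ω) s s' ↔ Separable A {iNop, iSwap} s s' := by
  have hτ : {iNop, iSwap} ∪ ω ⊆ ({iNop, iSwap, iInp, iOut, iUsed, iFree} : Set Interaction) :=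
    Set.union_subset (by intro i; simp only [Set.mem_insert_iff]; tauto)
      (hω.trans (by intro i; simp only [Set.mem_insert_iff]; tauto))
  exact ⟨Separable.of_forall_restricts fun i hi => Interaction.exists_nop_swap_restricts (hτ hi),
    Separable.mono Set.subset_union_left⟩

/-- for τ = {nop, swap} ∪ ω with ω ⊆ {inp, out, used, free},
two distinct states are τ-separable iff they are {nop, swap}-separable. -/
theorem separable_iff_nop_swap_separable {S E : Type} [Fintype S] [Fintype E]
    (A : TS S E) (hreach : Reachable A)
    (ω : Set Interaction) (hω : ω ⊆ {iInp, iOut, iUsed, iFree})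
    (s s' : S) (hne : s ≠ s') :
    Separable A ({iNop, iSwap} ∪ ω) s s' ↔ Separable A {iNop, iSwap} s s' :=
  separable_iff_nop_swap_separable_general A ω hω s s'
end

section
/- Let τ = {nop, inp, free} or τ = {nop, inp, used, free}, and let φ be a cubic monotone 3-CNF with m clauses. The key event k is τ-inhibitable at the key state q in the TS A_φ if and only if φ has a one-in-three model. -/
/-! The TS A_φ for a cubic monotone 3-CNF φ with m clauses.  The clauses are
given by a map X : Fin m → Fin 3 → V listing the three variables X_{i,0},
X_{i,1}, X_{i,2} of every clause ζ_i. -/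

inductive PState (m : ℕ) where
  | s0 | s1 | q
  | t (i : Fin m) (j : Fin 9)

inductive PEvent (m : ℕ) (V : Type) where
  | k | h
  | hc (i : Fin m)
  | r (i : Fin m)
  | var (v : V)

/-- The clause gadget of clause i: for each permutation (α, β, γ) of {0,1,2}
there is a path labeled X_{i,α}, X_{i,β}, X_{i,γ} from t_{i,0} to t_{i,5}. -/
def gadget {m : ℕ} {V : Type} [DecidableEq V] (X : Fin m → Fin 3 → V)
    (i : Fin m) (j : Fin 9) (v : V) : Option (PState m) :=
  if j = 0 then
    if v = X i 0 then some (.t i 1)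
    else if v = X i 1 then some (.t i 7)
    else if v = X i 2 then some (.t i 3) else none
  else if j = 1 then
    if v = X i 1 then some (.t i 2)
    else if v = X i 2 then some (.t i 4) else none
  else if j = 2 then
    if v = X i 2 then some (.t i 5) else none
  else if j = 3 then
    if v = X i 0 then some (.t i 4)
    else if v = X i 1 then some (.t i 6) else none
  else if j = 4 then
    if v = X i 1 then some (.t i 5) else none
  else if j = 6 then
    if v = X i 0 then some (.t i 5) else none
  else if j = 7 then
    if v = X i 0 then some (.t i 2)
    else if v = X i 2 then some (.t i 6) else none
  else none

def Aphi {m : ℕ} {V : Type} [DecidableEq V] (X : Fin m → Fin 3 → V) :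
    TS (PState m) (PEvent m V) where
  delta := fun s e =>
    match s, e with
    | .s0, .k => some .s1
    | .s0, .h => some .q
    | .s0, .r i => some (.t i 0)
    | .s1, .r i => some (.t i 8)
    | .q, .hc i => some (.t i 5)
    | .t i j, .k => if j = 0 then some (.t i 8) else none
    | .t i j, .var v => gadget X i j v
    | _, _ => none
  init := .s0

/-- φ is a cubic monotone 3-CNF: each clause consists of three distinct
variables and every variable is a member of exactly three clauses. -/
def CubicMonotone {m : ℕ} {V : Type} [DecidableEq V] [Fintype V]
    (X : Fin m → Fin 3 → V) : Prop :=
  (∀ i : Fin m, Function.Injective (X i)) ∧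
  (∀ v : V,
    (Finset.univ.filter (fun p : Fin m × Fin 3 => X p.1 p.2 = v)).card = 3)

/-- M is a one-in-three model of φ: it hits every clause exactly once. -/
def OneInThree {m : ℕ} {V : Type} (X : Fin m → Fin 3 → V) (M : Set V) : Prop :=
  ∀ i : Fin m, ∃! j : Fin 3, X i j ∈ M

/-! Every interaction of `τ` fixes or lowers the support, and an interaction lowering `1` to `0`
(necessarily `inp`) is undefined at `0`.  In a region inhibiting `k` at `q` this forces the
support to be `1` at `t_{i,0}` and `0` at `t_{i,5}`, so on each path through the gadget of
clause `i` exactly one variable event lowers: at least one since the support drops, at most one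
since the gadget can read any two of its variables in succession.  Conversely, for a one-in-three
model `M`, signalling `inp` exactly on `k`, `h` and the variables of `M` gives a region whose
support on `t_{i,j}` records whether the model variable of clause `i` has been read. -/

def NeverRaises (τ : Set Interaction) : Prop :=
  ∀ f ∈ τ, f false ≠ some true

def LowersOnlyFromOne (τ : Set Interaction) : Prop :=
  ∀ f ∈ τ, f true = some false → f false = none

theorem neverRaises_of_subset {τ : Set Interaction} (hτ : τ ⊆ {iNop, iInp, iUsed, iFree}) :
    NeverRaises τ := by
  intro f hf
  rcases hτ hf with rfl | rfl | rfl | rfl <;> decide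

theorem lowersOnlyFromOne_of_subset {τ : Set Interaction}
    (hτ : τ ⊆ {iNop, iInp, iUsed, iFree}) : LowersOnlyFromOne τ := by
  intro f hf
  rcases hτ hf with rfl | rfl | rfl | rfl <;> decide

section Region

variable {S E : Type} {A : TS S E} {τ : Set Interaction} {sup : S → Bool}
  {sig : E → Interaction} {s s' : S} {e : E}

theorem IsRegion.sig_apply (hR : IsRegion A τ sup sig) (h : A.delta s e = some s') :
    sig e (sup s) = some (sup s') :=
  hR.2 s e s' h

theorem IsRegion.sup_ne_of_sig_eq_none (hR : IsRegion A τ sup sig) (h : A.delta s e = some s')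
    {b : Bool} (hb : sig e b = none) : sup s ≠ b := by
  rintro rfl
  simp [hR.sig_apply h] at hb

theorem IsRegion.sup_eq_false_of_step (hR : IsRegion A τ sup sig) (hτ : NeverRaises τ)
    (h : A.delta s e = some s') (hs : sup s = false) : sup s' = false := by
  by_contra hs'
  rw [Bool.not_eq_false] at hs'
  exact hτ _ (hR.1 e) (by rw [← hs, hR.sig_apply h, hs'])

theorem IsRegion.sup_eq_false_of_lowers (hR : IsRegion A τ sup sig)
    (h : A.delta s e = some s') (hs : sup s = true) (he : sig e true = some false) :
    sup s' = false := by
  simpa [hs, he] using hR.sig_apply h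

theorem IsRegion.sup_eq_true_of_step (hR : IsRegion A τ sup sig)
    (h : A.delta s e = some s') (hs : sup s = true) (he : sig e true ≠ some false) :
    sup s' = true := by
  have := hR.sig_apply h
  rw [hs] at this
  cases hs' : sup s' <;> simp_all

end Region

section Forward

variable {m : ℕ} {V : Type} [DecidableEq V] {X : Fin m → Fin 3 → V} {τ : Set Interaction}
  {sup : PState m → Bool} {sig : PEvent m V → Interaction}

theorem gadget_two_steps {i : Fin m} (hX : Function.Injective (X i)) {a b : Fin 3} (hab : a ≠ b) :
    ∃ j j', (Aphi X).delta (.t i 0) (.var (X i a)) = some (.t i j) ∧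
      (Aphi X).delta (.t i j) (.var (X i b)) = some (.t i j') := by
  show ∃ j j', gadget X i 0 (X i a) = some (.t i j) ∧ gadget X i j (X i b) = some (.t i j')
  fin_cases a <;> fin_cases b <;> simp_all [gadget, hX.eq_iff]

theorem sup_q_eq_false (hR : IsRegion (Aphi X) τ sup sig) (hτ : NeverRaises τ)
    (hk : sig .k (sup .q) = none) : sup .q = false := by
  cases hq : sup .q
  · rfl
  · have hs0 : sup .s0 = true := by
      cases hs0 : sup .s0
      · simpa [hq] using hR.sup_eq_false_of_step hτ (rfl : (Aphi X).delta .s0 .h = _) hs0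
      · rfl
    rw [hq] at hk
    exact (hR.sup_ne_of_sig_eq_none (rfl : (Aphi X).delta .s0 .k = _) hk hs0).elim

theorem sup_t_zero (hR : IsRegion (Aphi X) τ sup sig) (hτ : NeverRaises τ)
    (hk : sig .k (sup .q) = none) (i : Fin m) : sup (.t i 0) = true := by
  rw [sup_q_eq_false hR hτ hk] at hk
  simpa using hR.sup_ne_of_sig_eq_none (s' := .t i 8) (by simp [Aphi]) hk

theorem sup_t_five (hR : IsRegion (Aphi X) τ sup sig) (hτ : NeverRaises τ)
    (hk : sig .k (sup .q) = none) (i : Fin m) : sup (.t i 5) = false :=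
  hR.sup_eq_false_of_step hτ (rfl : (Aphi X).delta .q (.hc i) = _) (sup_q_eq_false hR hτ hk)

theorem exists_var_lowers (hR : IsRegion (Aphi X) τ sup sig) (hτ : NeverRaises τ)
    (hk : sig .k (sup .q) = none) (i : Fin m) :
    ∃ l, sig (.var (X i l)) true = some false := by
  by_contra! hnone
  have hkeep {j j' : Fin 9} (l : Fin 3)
      (h : (Aphi X).delta (.t i j) (.var (X i l)) = some (.t i j')) :
      sup (.t i j) = true → sup (.t i j') = true :=
    fun hs => hR.sup_eq_true_of_step h hs (hnone l)
  have h5 : sup (.t i 5) = true :=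
    hkeep 2 (j := 2) (by simp [Aphi, gadget]) <| hkeep 1 (j := 1) (by simp [Aphi, gadget]) <|
      hkeep 0 (by simp [Aphi, gadget]) (sup_t_zero hR hτ hk i)
  simp [sup_t_five hR hτ hk i] at h5

theorem eq_of_var_lowers (hR : IsRegion (Aphi X) τ sup sig) (hτ : NeverRaises τ)
    (hτ' : LowersOnlyFromOne τ) (hk : sig .k (sup .q) = none) {i : Fin m}
    (hX : Function.Injective (X i)) {a b : Fin 3}
    (ha : sig (.var (X i a)) true = some false) (hb : sig (.var (X i b)) true = some false) :
    a = b := by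
  by_contra hab
  obtain ⟨j, j', hj, hj'⟩ := gadget_two_steps hX hab
  have hsup := hR.sup_eq_false_of_lowers hj (sup_t_zero hR hτ hk i) ha
  exact hR.sup_ne_of_sig_eq_none hj' (hτ' _ (hR.1 _) hb) hsup

theorem oneInThree_of_inhibitable (hX : ∀ i, Function.Injective (X i)) (hτ : NeverRaises τ)
    (hτ' : LowersOnlyFromOne τ) (h : Inhibitable (Aphi X) τ .k .q) :
    ∃ M : Set V, OneInThree X M := by
  obtain ⟨sup, sig, hR, hk⟩ := h
  exact ⟨{v | sig (.var v) true = some false}, fun i =>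
    existsUnique_of_exists_of_unique (exists_var_lowers hR hτ hk i)
      fun _ _ => eq_of_var_lowers hR hτ hτ' hk (hX i)⟩

end Forward

section Backward

variable {m : ℕ} {V : Type} [DecidableEq V] {X : Fin m → Fin 3 → V}

/-- The positions of clause `i` already read on reaching `t i j` from `t i 0`; the state `t i 8`,
outside the gadget, counts as having read all three. -/
def gadgetRead : Fin 9 → Finset (Fin 3) :=
  ![∅, {0}, {0, 1}, {2}, {0, 2}, Finset.univ, {1, 2}, {1}, Finset.univ]

theorem exists_of_gadget_eq_some {i : Fin m} {j : Fin 9} {v : V} {s : PState m}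
    (h : gadget X i j v = some s) :
    ∃ l j', v = X i l ∧ s = .t i j' ∧ l ∉ gadgetRead j ∧
      gadgetRead j' = insert l (gadgetRead j) := by
  unfold gadget at h
  split_ifs at h <;> cases h <;> subst_vars <;> exact ⟨_, _, rfl, rfl, by decide, by decide⟩

def modelSup (c : Fin m → Fin 3) : PState m → Bool
  | .s0 => true
  | .s1 => false
  | .q => false
  | .t i j => decide (c i ∉ gadgetRead j)

def modelSig (M : Set V) [DecidablePred (· ∈ M)] : PEvent m V → Interaction
  | .k => iInp
  | .h => iInp
  | .hc _ => iNop
  | .r _ => iNop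
  | .var v => if v ∈ M then iInp else iNop

theorem isRegion_model {τ : Set Interaction} (hnop : iNop ∈ τ) (hinp : iInp ∈ τ) (M : Set V)
    [DecidablePred (· ∈ M)] {c : Fin m → Fin 3} (hc : ∀ i l, X i l ∈ M ↔ l = c i) :
    IsRegion (Aphi X) τ (modelSup c) (modelSig M) := by
  refine ⟨fun e => ?_, fun s e s' h => ?_⟩
  · cases e <;> simp only [modelSig] <;> first | assumption | split_ifs <;> assumption
  cases s with
  | t i j =>
    cases e with
    | k =>
      obtain ⟨rfl, rfl⟩ : j = 0 ∧ .t i 8 = s' := by simpa [Aphi] using h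
      simp [modelSup, modelSig, gadgetRead, iInp]
    | var v =>
      obtain ⟨l, j', rfl, rfl, hl, hread⟩ := exists_of_gadget_eq_some h
      by_cases hlc : l = c i
      · subst hlc
        simp [modelSup, modelSig, hc, hl, hread, iInp]
      · simp [modelSup, modelSig, hc, hlc, hread, iNop, Ne.symm hlc]
    | _ => simp [Aphi] at h
  | _ =>
    cases e <;> simp [Aphi] at h <;> subst h <;>
      simp [modelSup, modelSig, gadgetRead, iInp, iNop]

theorem inhibitable_of_oneInThree {τ : Set Interaction} (hnop : iNop ∈ τ) (hinp : iInp ∈ τ)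
    {M : Set V} (hM : OneInThree X M) : Inhibitable (Aphi X) τ .k .q := by
  classical
  choose c hc using hM
  exact ⟨modelSup c, modelSig M,
    isRegion_model hnop hinp M fun i l => ⟨(hc i).2 l, fun h => h ▸ (hc i).1⟩, rfl⟩

end Backward

/-- k is τ-inhibitable at q in A_φ iff φ has a one-in-three model,
for τ = {nop, inp, free} or τ = {nop, inp, used, free}. -/
theorem key_inhibitable_iff_model {m : ℕ} {V : Type} [DecidableEq V] [Fintype V]
    (X : Fin m → Fin 3 → V) (hcubic : CubicMonotone X)
    (τ : Set Interaction)
    (hτ : τ = {iNop, iInp, iFree} ∨ τ = {iNop, iInp, iUsed, iFree}) :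
    Inhibitable (Aphi X) τ PEvent.k PState.q ↔ ∃ M : Set V, OneInThree X M := by
  have hsub : τ ⊆ {iNop, iInp, iUsed, iFree} := by
    rcases hτ with rfl | rfl <;> intro f <;>
      simp only [Set.mem_insert_iff, Set.mem_singleton_iff] <;> tauto
  have hnop : iNop ∈ τ := by rcases hτ with rfl | rfl <;> simp
  have hinp : iInp ∈ τ := by rcases hτ with rfl | rfl <;> simp
  exact ⟨oneInThree_of_inhibitable hcubic.1 (neverRaises_of_subset hsub)
    (lowersOnlyFromOne_of_subset hsub), fun ⟨M, hM⟩ => inhibitable_of_oneInThree hnop hinp hM⟩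
end
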